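/- Let A be a commutative K-algebra graded by ℤ^n and let χ ∈ ℤ^n. Then a K-algebra homomorphism x : A → K is semistable with respect to χ if and only if χ (viewed in ℚ^n) lies in the orbit cone ω(x). Equivalently, the semistable set {x : x semistable w.r.t. χ} equals {x : χ ∈ ω(x)}. -/

import Mathlib

/-!
The degrees `m` admitting a homogeneous `a ∈ A_m` with `x a ≠ 0` form an additive submonoid
`M` of `ℤ^n`, since `x` is multiplicative and `K` has no zero divisors. So `χ` is semistable
exactly when some positive multiple `Nχ` lies in `M`. One direction is then `χ = N⁻¹ • Nχ`.
For the other, a nonnegative rational combination of elements of `M` becomes an element of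
`M` after multiplying by a common denominator, which is a positive integer.
-/

/-- The convex cone in `ℚ^n` generated over `ℚ_{≥0}` by a set `S`:
all finite nonnegative rational combinations of elements of `S`. -/
def coneGen {n : ℕ} (S : Set (Fin n → ℚ)) : Set (Fin n → ℚ) :=
  {v | ∃ (s : Finset (Fin n → ℚ)) (c : (Fin n → ℚ) → ℚ),
    (∀ w ∈ s, 0 ≤ c w ∧ w ∈ S) ∧ v = ∑ w ∈ s, c w • w}

/-- The orbit cone `ω(x)` of a `K`-algebra homomorphism `x : A → K`: the convex
cone generated over `ℚ_{≥0}` by all `m ∈ ℤ^n` admitting `a ∈ 𝒜 m` with `x a ≠ 0`. -/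
def orbitCone {K A : Type*} [Field K] [CommRing A] [Algebra K A]
    {n : ℕ} (𝒜 : (Fin n → ℤ) → Submodule K A) (x : A →ₐ[K] K) : Set (Fin n → ℚ) :=
  coneGen {v | ∃ (m : Fin n → ℤ) (a : A), a ∈ 𝒜 m ∧ x a ≠ 0 ∧ v = fun j => (m j : ℚ)}

section ConeGen

variable {n : ℕ} {S T : Set (Fin n → ℚ)}

theorem smul_mem_coneGen {w : Fin n → ℚ} (hw : w ∈ S) {c : ℚ} (hc : 0 ≤ c) :
    c • w ∈ coneGen S := by
  classical
  exact ⟨{w}, fun _ => c, by simpa using ⟨hc, hw⟩, by simp⟩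

theorem coneGen_subset (hzero : 0 ∈ T) (hadd : ∀ u v, u ∈ T → v ∈ T → u + v ∈ T)
    (hsmul : ∀ w ∈ S, ∀ c : ℚ, 0 ≤ c → c • w ∈ T) : coneGen S ⊆ T := by
  rintro _ ⟨s, c, hs, rfl⟩
  exact Finset.sum_induction _ (· ∈ T) hadd hzero fun w hw => hsmul w (hs w hw).2 _ (hs w hw).1

end ConeGen

section RatSaturation

variable {ι : Type*} (M : AddSubmonoid (ι → ℤ))

def ratSaturation : Set (ι → ℚ) :=
  {v | ∃ N : ℕ, 0 < N ∧ ∃ z ∈ M, ∀ j, (z j : ℚ) = N * v j}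

theorem zero_mem_ratSaturation : 0 ∈ ratSaturation M :=
  ⟨1, one_pos, 0, M.zero_mem, by simp⟩

theorem add_mem_ratSaturation {u v : ι → ℚ} (hu : u ∈ ratSaturation M)
    (hv : v ∈ ratSaturation M) : u + v ∈ ratSaturation M := by
  obtain ⟨N, hN, y, hy, hyu⟩ := hu
  obtain ⟨N', hN', z, hz, hzv⟩ := hv
  refine ⟨N * N', Nat.mul_pos hN hN', N' • y + N • z,
    M.add_mem (M.nsmul_mem hy N') (M.nsmul_mem hz N), fun j => ?_⟩
  simp only [Pi.add_apply, Pi.smul_apply]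
  push_cast [nsmul_eq_mul]
  rw [hyu, hzv]
  ring

theorem smul_cast_mem_ratSaturation {m : ι → ℤ} (hm : m ∈ M) {c : ℚ} (hc : 0 ≤ c) :
    c • (fun j => (m j : ℚ)) ∈ ratSaturation M := by
  have hnum : (c.num.toNat : ℚ) = c.den * c := by
    rw [Rat.den_mul_eq_num, ← Int.cast_natCast, Int.toNat_of_nonneg (Rat.num_nonneg.mpr hc)]
  refine ⟨c.den, c.den_pos, c.num.toNat • m, M.nsmul_mem hm _, fun j => ?_⟩
  simp only [Pi.smul_apply, smul_eq_mul, nsmul_eq_mul]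
  push_cast
  rw [hnum, mul_assoc]

end RatSaturation

section NonvanishingDegrees

variable {ι K A : Type*} [AddMonoid ι] [CommSemiring K] [NoZeroDivisors K] [Nontrivial K]
  [Semiring A] [Algebra K A] (𝒜 : ι → Submodule K A) [SetLike.GradedMonoid 𝒜] (x : A →ₐ[K] K)

def nonvanishingDegrees : AddSubmonoid ι where
  carrier := {m | ∃ a ∈ 𝒜 m, x a ≠ 0}
  zero_mem' := ⟨1, SetLike.one_mem_graded 𝒜, by simp⟩
  add_mem' := by
    rintro m m' ⟨a, ha, hxa⟩ ⟨b, hb, hxb⟩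
    exact ⟨a * b, SetLike.mul_mem_graded ha hb, by simpa using mul_ne_zero hxa hxb⟩

@[simp]
theorem mem_nonvanishingDegrees {m : ι} : m ∈ nonvanishingDegrees 𝒜 x ↔ ∃ a ∈ 𝒜 m, x a ≠ 0 :=
  Iff.rfl

end NonvanishingDegrees

theorem orbitCone_subset_ratSaturation {K A : Type*} [Field K] [CommRing A] [Algebra K A]
    {n : ℕ} (𝒜 : (Fin n → ℤ) → Submodule K A) [SetLike.GradedMonoid 𝒜] (x : A →ₐ[K] K) :
    orbitCone 𝒜 x ⊆ ratSaturation (nonvanishingDegrees 𝒜 x) := by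
  refine coneGen_subset (zero_mem_ratSaturation _) (fun _ _ => add_mem_ratSaturation _) ?_
  rintro _ ⟨m, a, ha, hxa, rfl⟩ c hc
  exact smul_cast_mem_ratSaturation _ ((mem_nonvanishingDegrees 𝒜 x).2 ⟨a, ha, hxa⟩) hc

theorem semistable_iff_mem_orbitCone_general
    {K A : Type*} [Field K] [CommRing A] [Algebra K A]
    {n : ℕ} (𝒜 : (Fin n → ℤ) → Submodule K A) [GradedAlgebra 𝒜]
    (χ : Fin n → ℤ) (x : A →ₐ[K] K) :
    (∃ N : ℕ, 0 < N ∧ ∃ a ∈ 𝒜 ((N : ℤ) • χ), x a ≠ 0) ↔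
      (fun j => (χ j : ℚ)) ∈ orbitCone 𝒜 x := by
  constructor
  · rintro ⟨N, hN, a, ha, hxa⟩
    have hχ : (fun j => (χ j : ℚ)) = (N : ℚ)⁻¹ • fun j => ((((N : ℤ) • χ) j : ℤ) : ℚ) := by
      funext j
      simp [hN.ne']
    rw [hχ, orbitCone]
    refine smul_mem_coneGen ?_ (by positivity)
    exact ⟨_, a, ha, hxa, rfl⟩
  · intro hχ
    obtain ⟨N, hN, z, hz, hzχ⟩ := orbitCone_subset_ratSaturation 𝒜 x hχ
    have hz_eq : z = (N : ℤ) • χ := funext fun j => by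
      have hzj := hzχ j
      dsimp only at hzj
      simp only [Pi.smul_apply, smul_eq_mul]
      exact_mod_cast hzj
    exact ⟨N, hN, (mem_nonvanishingDegrees 𝒜 x).1 (hz_eq ▸ hz)⟩

/-- Let `A` be a commutative `K`-algebra graded by `ℤ^n` and `χ ∈ ℤ^n`. A
`K`-algebra homomorphism `x : A → K` is semistable with respect to `χ` (i.e. there
are `N > 0` and `a ∈ 𝒜 (N • χ)` with `x a ≠ 0`) if and only if `χ`, viewed in
`ℚ^n`, lies in the orbit cone `ω(x)`. -/
theorem semistable_iff_mem_orbitCone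
    {K A : Type*} [Field K] [CommRing A] [Algebra K A]
    {n : ℕ} (hn : 1 ≤ n) (𝒜 : (Fin n → ℤ) → Submodule K A) [GradedAlgebra 𝒜]
    (χ : Fin n → ℤ) (x : A →ₐ[K] K) :
    (∃ N : ℕ, 0 < N ∧ ∃ a ∈ 𝒜 ((N : ℤ) • χ), x a ≠ 0) ↔
      (fun j => (χ j : ℚ)) ∈ orbitCone 𝒜 x :=
  semistable_iff_mem_orbitCone_general 𝒜 χ x
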